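/- A linear map D : V → V is an antiderivation of the Leibniz algebra L₁₇ if and only if D(e₁) and D(e₂) are arbitrary vectors of V, and, writing a for the coefficient of e₁ in D(e₁) and b for the coefficient of e₂ in D(e₂), one has D(e₃) = b·e₃ − a·e₄ and D(e₄) = −b·e₃ + a·e₄. Consequently, the space of antiderivations of L₁₇ is an 8-dimensional linear subspace of End(V). -/

import Mathlib

/-- `V = ℂ⁴`. -/
abbrev V : Type := Fin 4 → ℂ

/-- standard basis: `e 0 = e₁`, ..., `e 3 = e₄`. -/
def e (i : Fin 4) : V := Pi.single i 1

/-- Bracket of the Leibniz algebra `L₁₇`: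
`⟦e₁,e₂⟧ = e₃`, `⟦e₂,e₁⟧ = e₄`, all other basis products zero. -/
def br (x y : V) : V :=
  (x 0 * y 1) • e 2 + (x 1 * y 0) • e 3

/-- An antiderivation. -/
def IsAntiDer (D : V →ₗ[ℂ] V) : Prop :=
  ∀ x y : V, D (br x y) = br x (D y) - br y (D x)

/-!
The antiderivation identity `D⟦x,y⟧ = ⟦x,Dy⟧ - ⟦y,Dx⟧` is bilinear in `(x, y)`, so it suffices to
test it on pairs of basis vectors. Since `⟦e₁,v⟧ = v₂ e₃`, `⟦e₂,v⟧ = v₁ e₄` and `⟦e₃,v⟧ = ⟦e₄,v⟧ = 0`,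
the pairs `(e₁,e₂)` and `(e₂,e₁)` give the two formulas for `D e₃` and `D e₄`, and these already make
every other pair hold. Antiderivations are therefore the kernel of a linear map from the
16-dimensional `End V` onto `V × V`, which is surjective because it restricts to
`D ↦ (D e₃, D e₄)` on maps killing `e₁, e₂`; so they form an 8-dimensional subspace.
-/

theorem antiderivation_identity_iff_basis {R M ι : Type*} [CommRing R] [AddCommGroup M]
    [Module R M] (b : Module.Basis ι R M) (B : M →ₗ[R] M →ₗ[R] M) (D : M →ₗ[R] M) :
    (∀ x y, D (B x y) = B x (D y) - B y (D x)) ↔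
      ∀ i j, D (B (b i) (b j)) = B (b i) (D (b j)) - B (b j) (D (b i)) := by
  refine ⟨fun h i j => h _ _, fun h x y => ?_⟩
  have hB : B.compr₂ D = B.compl₂ D - B.flip ∘ₗ D :=
    b.ext fun i => b.ext fun j => by simpa using h i j
  simpa using LinearMap.congr_fun₂ hB x y

def brₗ : V →ₗ[ℂ] V →ₗ[ℂ] V :=
  LinearMap.mk₂ ℂ br (fun _ _ _ => by simp [br]; module) (fun _ _ _ => by simp [br]; module)
    (fun _ _ _ => by simp [br]; module) (fun _ _ _ => by simp [br]; module)

@[simp] lemma e_apply (i j : Fin 4) : e i j = if j = i then 1 else 0 := Pi.single_apply i 1 j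

lemma br_e_zero (v : V) : br (e 0) v = v 1 • e 2 := by simp [br]

lemma br_e_one (v : V) : br (e 1) v = v 0 • e 3 := by simp [br]

lemma br_e_two (v : V) : br (e 2) v = 0 := by simp [br]

lemma br_e_three (v : V) : br (e 3) v = 0 := by simp [br]

lemma isAntiDer_iff_basis (D : V →ₗ[ℂ] V) : IsAntiDer D ↔
    ∀ i j, D (br (e i) (e j)) = br (e i) (D (e j)) - br (e j) (D (e i)) := by
  unfold IsAntiDer e
  simpa only [brₗ, LinearMap.mk₂_apply, Pi.basisFun_apply] using
    antiderivation_identity_iff_basis (Pi.basisFun ℂ (Fin 4)) brₗ D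

lemma isAntiDer_iff (D : V →ₗ[ℂ] V) : IsAntiDer D ↔
    D (e 2) = (D (e 1) 1) • e 2 - (D (e 0) 0) • e 3 ∧
      D (e 3) = -(D (e 1) 1) • e 2 + (D (e 0) 0) • e 3 := by
  rw [isAntiDer_iff_basis]
  constructor
  · intro h
    have h01 := h 0 1
    have h10 := h 1 0
    simp only [br_e_zero, br_e_one, e_apply, if_pos, one_smul] at h01 h10
    exact ⟨h01, by rw [h10]; module⟩
  · rintro ⟨h2, h3⟩ i j
    fin_cases i <;> fin_cases j <;> simp [br_e_zero, br_e_one, br_e_two, br_e_three, h2, h3]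
    abel

def antiDerConstraint : (V →ₗ[ℂ] V) →ₗ[ℂ] V × V where
  toFun D := (D (e 2) - (D (e 1) 1 • e 2 - D (e 0) 0 • e 3),
    D (e 3) - (-D (e 1) 1 • e 2 + D (e 0) 0 • e 3))
  map_add' D D' := by
    simp only [LinearMap.add_apply, Pi.add_apply, Prod.mk_add_mk]
    congr 1 <;> module
  map_smul' c D := by
    simp only [LinearMap.smul_apply, Pi.smul_apply, smul_eq_mul, Prod.smul_mk, RingHom.id_apply]
    congr 1 <;> module

lemma mem_ker_antiDerConstraint (D : V →ₗ[ℂ] V) :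
    D ∈ LinearMap.ker antiDerConstraint ↔ IsAntiDer D := by
  rw [isAntiDer_iff, LinearMap.mem_ker]
  simp only [antiDerConstraint, LinearMap.coe_mk, AddHom.coe_mk, Prod.mk_eq_zero, sub_eq_zero]

lemma antiDerConstraint_surjective : Function.Surjective antiDerConstraint := by
  rintro ⟨u, w⟩
  refine ⟨(LinearMap.proj 2).smulRight u + (LinearMap.proj 3).smulRight w, ?_⟩
  simp [antiDerConstraint]

lemma finrank_ker_antiDerConstraint :
    Module.finrank ℂ (LinearMap.ker antiDerConstraint) = 8 := by
  have := LinearMap.finrank_range_add_finrank_ker antiDerConstraint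
  rw [LinearMap.range_eq_top.2 antiDerConstraint_surjective, finrank_top,
    Module.finrank_linearMap] at this
  simp only [Module.finrank_prod, Module.finrank_fintype_fun_eq_card, Fintype.card_fin] at this
  omega

/-- `D e₁`, `D e₂` are arbitrary; with `a` the coefficient of `e₁` in `D e₁` and
`b` the coefficient of `e₂` in `D e₂`, one has `D e₃ = b•e₃ - a•e₄` and
`D e₄ = -b•e₃ + a•e₄`. -/
theorem antiderivations_of_L17 :
    (∀ D : V →ₗ[ℂ] V, IsAntiDer D ↔
      D (e 2) = (D (e 1) 1) • e 2 - (D (e 0) 0) • e 3 ∧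
      D (e 3) = -(D (e 1) 1) • e 2 + (D (e 0) 0) • e 3) ∧
    ∃ S : Submodule ℂ (V →ₗ[ℂ] V),
      (S : Set (V →ₗ[ℂ] V)) = {D | IsAntiDer D} ∧ Module.finrank ℂ S = 8 :=
  ⟨isAntiDer_iff, LinearMap.ker antiDerConstraint,
    Set.ext mem_ker_antiDerConstraint, finrank_ker_antiDerConstraint⟩
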